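/- Let M₂ = ξ + η where ξ ∼ NB(r, p̄) and η ∼ Poisson(λ) are independent, q̄ = 1−p̄. Then for every bounded g : ℕ → ℝ, E[ q̄·(r + λp̄/q̄ + M₂)·g(M₂+1) − M₂·g(M₂) − λq̄·(g(M₂+2) − g(M₂+1)) ] = 0. -/

import Mathlib

open scoped BigOperators

/-- The pmf of the negative binomial distribution `NB(r, p̄)`. -/
noncomputable def nbPMF (r p : ℝ) (k : ℕ) : ℝ :=
  Real.Gamma (r + k) / ((k.factorial : ℝ) * Real.Gamma r) * p ^ (r : ℝ) * (1 - p) ^ k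

/-- The pmf of the Poisson distribution with mean `λ`. -/
noncomputable def poisPMF (lam : ℝ) (k : ℕ) : ℝ :=
  Real.exp (-lam) * lam ^ k / (k.factorial : ℝ)

/-- The pmf of `M₂ = ξ + η`, the independent sum of `NB(r, p̄)` and `Poisson(λ)`. -/
noncomputable def nbPoisPMF (r p lam : ℝ) (k : ℕ) : ℝ :=
  ∑ i ∈ Finset.range (k + 1), nbPMF r p i * poisPMF lam (k - i)

/-!
With `q̄ = 1 - p̄`, the generating function `A` of `NB(r, p̄)` satisfies `(1 - q̄X) A' = q̄ r A`
and that of `Poisson(λ)` satisfies `B' = λ B`, so by the Leibniz rule `M = A B` satisfies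
`(1 - q̄X) M' = (q̄ r + λ - λ q̄ X) M`. Read coefficientwise this is the three-term recurrence
`(k+1) μ(k+1) = (q̄ r + λ + q̄ k) μ(k) - λ q̄ μ(k-1)` for the pmf `μ` of `M₂`, and summing it
against `g(k+1)` and shifting indices gives the identity. The shifts are legitimate because
`μ` and `k μ(k)` are summable: both pmfs are, by the ratio test, and the coefficients of `A'`
satisfy the recurrence of `NB(r+1, p̄)`.
-/

open PowerSeries Filter Topology

theorem summable_of_succ_mul_eq {a : ℕ → ℝ} {q r : ℝ} (hq : |q| < 1)
    (ha : ∀ k : ℕ, (k + 1) * a (k + 1) = q * (r + k) * a k) : Summable a := by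
  obtain ⟨c, hqc, hc1⟩ := exists_between hq
  have hratio : Tendsto (fun k : ℕ => |q| * ((r + k) / (k + 1))) atTop (𝓝 |q|) := by
    have := (tendsto_add_mul_div_add_mul_atTop_nhds r 1 1 one_ne_zero).const_mul |q|
    rw [div_one, mul_one] at this
    exact this.congr fun k => by ring_nf
  refine summable_of_ratio_norm_eventually_le hc1 ?_
  filter_upwards [hratio.eventually_lt_const hqc, eventually_ge_atTop ⌈-r⌉₊] with k hk hkr
  have hrk : 0 ≤ r + k := by linarith [Nat.ceil_le.mp hkr]
  have hsucc : a (k + 1) = q * ((r + k) / (k + 1)) * a k := by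
    field_simp; linarith [ha k]
  rw [hsucc, norm_mul, norm_mul, Real.norm_eq_abs, Real.norm_eq_abs (_ / _),
    abs_of_nonneg (by positivity : 0 ≤ (r + k) / (k + 1))]
  gcongr

theorem summable_mul_of_abs_le {f g : ℕ → ℝ} {C : ℝ} (hf : Summable f) (hg : ∀ k, |g k| ≤ C) :
    Summable fun k => f k * g k :=
  (hf.abs.mul_right C).of_norm_bounded fun k => by
    rw [Real.norm_eq_abs, abs_mul]; exact mul_le_mul_of_nonneg_left (hg k) (abs_nonneg _)

theorem coeff_X_mul_derivative {R : Type*} [CommSemiring R] (f : R⟦X⟧) (n : ℕ) :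
    coeff n (X * d⁄dX R f) = n * coeff n f := by
  cases n with
  | zero => simp
  | succ n => rw [coeff_succ_X_mul, coeff_derivative, mul_comm]; push_cast; ring

theorem summable_coeff_mul {f g : ℝ⟦X⟧} (hf : Summable fun n => coeff n f)
    (hg : Summable fun n => coeff n g) : Summable fun n => coeff n (f * g) := by
  have := summable_sum_mul_antidiagonal_of_summable_norm' hf.norm hf hg.norm hg
  simpa only [coeff_mul] using this

theorem summable_coeff_derivative_iff {f : ℝ⟦X⟧} :
    (Summable fun n => coeff n (d⁄dX ℝ f)) ↔ Summable fun n : ℕ => n * coeff n f := by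
  rw [← summable_nat_add_iff 1 (f := fun n : ℕ => (n : ℝ) * coeff n f)]
  simp [coeff_derivative, mul_comm]

theorem derivative_mul_of_ode {R : Type*} [CommRing R] {A B : R⟦X⟧} {β a l : R}
    (hA : (1 - C β * X) * d⁄dX R A = C a * A) (hB : d⁄dX R B = C l * B) :
    (1 - C β * X) * d⁄dX R (A * B) = (C (a + l) - C (l * β) * X) * (A * B) := by
  rw [Derivation.leibniz, smul_eq_mul, smul_eq_mul, map_add, map_mul]
  linear_combination B * hA + (1 - C β * X) * A * hB

theorem tsum_stein_eq_zero {μ g : ℕ → ℝ} {α β γ B : ℝ} (hμ : Summable μ)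
    (hkμ : Summable fun k : ℕ => k * μ k) (hg : ∀ k, |g k| ≤ B)
    (hode : (1 - C β * X) * d⁄dX ℝ (mk μ) = (C α - C γ * X) * mk μ) :
    ∑' k : ℕ, μ k * ((α + β * k) * g (k + 1) - k * g k - γ * g (k + 2)) = 0 := by
  -- `hode` is the recurrence `(k+1) μ(k+1) = (α + β k) μ(k) - γ μ(k-1)`, with `μ(-1) = w 0 = 0`.
  set w : ℕ → ℝ := fun k => coeff k (X * mk μ)
  have hrec (k : ℕ) : (α + β * k) * μ k = (k + 1) * μ (k + 1) + γ * w k := by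
    have := congrArg (coeff k) hode
    simp only [sub_mul, one_mul, mul_assoc, map_sub, coeff_C_mul, coeff_derivative,
      coeff_X_mul_derivative, coeff_mk] at this
    linear_combination -this
  set jump : ℕ → ℝ := fun k => k * μ k * g k
  set lag : ℕ → ℝ := fun k => γ * (w k * g (k + 1))
  have hjump : Summable jump := summable_mul_of_abs_le hkμ hg
  have hlag_succ (k : ℕ) : lag (k + 1) = γ * (μ k * g (k + 2)) := by
    simp [lag, w, coeff_succ_X_mul]
  have hμg : Summable fun k => γ * (μ k * g (k + 2)) :=
    (summable_mul_of_abs_le hμ fun k => hg (k + 2)).mul_left γ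
  have hlag : Summable lag := (summable_nat_add_iff 1).mp (by simpa only [hlag_succ] using hμg)
  calc ∑' k : ℕ, μ k * ((α + β * k) * g (k + 1) - k * g k - γ * g (k + 2))
      = ∑' k, ((jump (k + 1) - jump k) + (lag k - γ * (μ k * g (k + 2)))) := by
        refine tsum_congr fun k => ?_
        simp only [jump, lag]
        push_cast
        linear_combination g (k + 1) * hrec k
    _ = (∑' k, jump (k + 1) - ∑' k, jump k) + (∑' k, lag k - ∑' k, γ * (μ k * g (k + 2))) := by
        rw [Summable.tsum_add (((summable_nat_add_iff 1).mpr hjump).sub hjump) (hlag.sub hμg),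
          Summable.tsum_sub ((summable_nat_add_iff 1).mpr hjump) hjump, hlag.tsum_sub hμg]
    _ = 0 := by
        rw [hjump.tsum_eq_zero_add, hlag.tsum_eq_zero_add]
        simp [jump, lag, w, hlag_succ]

theorem succ_mul_nbPMF_succ {r : ℝ} (hr : 0 < r) (p : ℝ) (k : ℕ) :
    (k + 1) * nbPMF r p (k + 1) = (1 - p) * (r + k) * nbPMF r p k := by
  have hΓ : Real.Gamma (r + (k + 1 : ℕ)) = (r + k) * Real.Gamma (r + k) := by
    rw [Nat.cast_succ, ← add_assoc, Real.Gamma_add_one (by positivity)]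
  have hΓr : Real.Gamma r ≠ 0 := (Real.Gamma_pos_of_pos hr).ne'
  rw [nbPMF, nbPMF, hΓ, Nat.factorial_succ, Nat.cast_mul, pow_succ]
  field_simp
  push_cast
  ring

theorem succ_mul_poisPMF_succ (lam : ℝ) (k : ℕ) :
    (k + 1) * poisPMF lam (k + 1) = lam * poisPMF lam k := by
  simp only [poisPMF, Nat.factorial_succ, Nat.cast_mul, Nat.cast_succ, pow_succ]
  field_simp

theorem derivative_mk_nbPMF {r : ℝ} (hr : 0 < r) (p : ℝ) :
    (1 - C (1 - p) * X) * d⁄dX ℝ (mk (nbPMF r p)) = C ((1 - p) * r) * mk (nbPMF r p) := by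
  ext k
  simp only [sub_mul, one_mul, mul_assoc, map_sub, coeff_C_mul, coeff_derivative,
    coeff_X_mul_derivative, coeff_mk]
  linear_combination succ_mul_nbPMF_succ hr p k

theorem derivative_mk_poisPMF (lam : ℝ) :
    d⁄dX ℝ (mk (poisPMF lam)) = C lam * mk (poisPMF lam) := by
  ext k
  rw [coeff_derivative, coeff_C_mul, coeff_mk, coeff_mk, mul_comm]
  exact succ_mul_poisPMF_succ lam k

theorem mk_nbPoisPMF (r p lam : ℝ) :
    mk (nbPoisPMF r p lam) = mk (nbPMF r p) * mk (poisPMF lam) := by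
  ext k
  rw [coeff_mul, Finset.Nat.sum_antidiagonal_eq_sum_range_succ_mk]
  simp [nbPoisPMF]

theorem summable_nbPMF {r p : ℝ} (hr : 0 < r) (hp : |1 - p| < 1) : Summable (nbPMF r p) :=
  summable_of_succ_mul_eq hp (succ_mul_nbPMF_succ hr p)

theorem summable_coeff_derivative_mk_nbPMF {r p : ℝ} (hr : 0 < r) (hp : |1 - p| < 1) :
    Summable fun k => coeff k (d⁄dX ℝ (mk (nbPMF r p))) := by
  refine summable_of_succ_mul_eq (r := r + 1) hp fun k => ?_
  have hrec := succ_mul_nbPMF_succ hr p (k + 1)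
  simp only [coeff_derivative, coeff_mk]
  push_cast at hrec ⊢
  linear_combination (k + 1) * hrec

theorem summable_poisPMF (lam : ℝ) : Summable (poisPMF lam) :=
  ((Real.summable_pow_div_factorial lam).mul_left (Real.exp (-lam))).congr fun k => by
    simp [poisPMF, mul_div_assoc]

theorem summable_nbPoisPMF {r p : ℝ} (hr : 0 < r) (hp : |1 - p| < 1) (lam : ℝ) :
    Summable (nbPoisPMF r p lam) := by
  have := summable_coeff_mul (f := mk (nbPMF r p)) (g := mk (poisPMF lam))
    (by simpa using summable_nbPMF hr hp) (by simpa using summable_poisPMF lam)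
  simpa [← mk_nbPoisPMF] using this

theorem summable_natCast_mul_nbPoisPMF {r p : ℝ} (hr : 0 < r) (hp : |1 - p| < 1) (lam : ℝ) :
    Summable fun k : ℕ => k * nbPoisPMF r p lam k := by
  have hA : Summable fun k => coeff k (mk (nbPMF r p)) := by simpa using summable_nbPMF hr hp
  have hB : Summable fun k => coeff k (mk (poisPMF lam)) := by simpa using summable_poisPMF lam
  have hdB : Summable fun k => coeff k (d⁄dX ℝ (mk (poisPMF lam))) := by
    simpa [derivative_mk_poisPMF, coeff_C_mul] using (summable_poisPMF lam).mul_left lam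
  have hdM : Summable fun k => coeff k (d⁄dX ℝ (mk (nbPoisPMF r p lam))) := by
    rw [mk_nbPoisPMF, Derivation.leibniz]
    simp only [smul_eq_mul, map_add]
    exact (summable_coeff_mul hA hdB).add
      (summable_coeff_mul hB (summable_coeff_derivative_mk_nbPMF hr hp))
  simpa using summable_coeff_derivative_iff.mp hdM

theorem stmt_5_general (r p lam : ℝ) (hr : 0 < r) (hp0 : 0 < p) (hp1 : p < 1)
    (g : ℕ → ℝ) (C : ℝ) (hg : ∀ k, |g k| ≤ C) :
    ∑' k : ℕ,
      nbPoisPMF r p lam k *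
        ((1 - p) * (r + lam * p / (1 - p) + (k : ℝ)) * g (k + 1) - (k : ℝ) * g k -
          lam * (1 - p) * (g (k + 2) - g (k + 1))) = 0 := by
  have hp : |1 - p| < 1 := by rw [abs_lt]; constructor <;> linarith
  have hode := derivative_mul_of_ode (derivative_mk_nbPMF hr p) (derivative_mk_poisPMF lam)
  rw [← mk_nbPoisPMF] at hode
  rw [← tsum_stein_eq_zero (summable_nbPoisPMF hr hp lam)
    (summable_natCast_mul_nbPoisPMF hr hp lam) hg hode]
  refine tsum_congr fun k => ?_
  have hq : 1 - p ≠ 0 := sub_ne_zero.mpr hp1.ne'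
  field_simp
  ring

/-- Perturbed Stein identity for `M₂ = NB(r, p̄) ∗ Poisson(λ)`: for every bounded `g`,
`E[q̄ (r + λ p̄/q̄ + M₂) g(M₂+1) − M₂ g(M₂) − λ q̄ (g(M₂+2) − g(M₂+1))] = 0`,
where `q̄ = 1 − p̄`. -/
theorem stmt_5 (r p lam : ℝ) (hr : 0 < r) (hp0 : 0 < p) (hp1 : p < 1) (hlam : 0 < lam)
    (g : ℕ → ℝ) (C : ℝ) (hg : ∀ k, |g k| ≤ C) :
    ∑' k : ℕ,
      nbPoisPMF r p lam k *
        ((1 - p) * (r + lam * p / (1 - p) + (k : ℝ)) * g (k + 1) - (k : ℝ) * g k -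
          lam * (1 - p) * (g (k + 2) - g (k + 1))) = 0 :=
  stmt_5_general r p lam hr hp0 hp1 g C hg
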